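/- With S, ℓ, Occ, and S_w as above, suppose I is the set of positions in S_w corresponding to occurrences i ∈ Occ(w) with ℓ(i) ∈ [a,b]; then I is a contiguous interval of S_w. Moreover, for a character c, the occurrences of c within the interval I of S_w form a contiguous range of the occurrences of c in S_w, and its cardinality equals |{i ∈ Occ(w·c) : ℓ(i) ∈ [a,b]}|, assuming every occurrence of w·c in S is an occurrence of w followed by c. -/

import Mathlib

def occursAt {α : Type*} (S P : List α) (i : ℕ) : Prop := P <+: S.drop i

instance {α : Type*} [DecidableEq α] (S P : List α) (i : ℕ) : Decidable (occursAt S P i) :=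
  inferInstanceAs (Decidable (P <+: S.drop i))

/-- The starting positions of occurrences of `w` in `S`, stably sorted by label. -/
def sortedOcc {α : Type*} [DecidableEq α] (S : List α) (ℓ : ℕ → ℕ) (w : List α) : List ℕ :=
  ((List.range S.length).filter (fun i => decide (occursAt S w i))).mergeSort
    (fun i j => decide (ℓ i < ℓ j ∨ (ℓ i = ℓ j ∧ i ≤ j)))

/-- `S_w`: the characters following occurrences of `w` in `S` (the sentinel `d` when the
occurrence reaches the end of `S`), listed sorted by the labels of those occurrences. -/
def Sw {α : Type*} [DecidableEq α] (S : List α) (ℓ : ℕ → ℕ) (d : α) (w : List α) : List α :=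
  (sortedOcc S ℓ w).map (fun i => S.getD (i + w.length) d)

/-!
Since `sortedOcc` is sorted by label, the label is monotone along `S_w`, so the positions whose
label lies in `[a,b]` form an interval `[lo,hi)`. Inside the increasing list of positions of `c`
in `S_w`, the conditions `lo ≤ k` and `k < hi` are upward and downward closed, so they cut out a
drop followed by a take. For the count, `k ↦ sortedOcc[k]` is injective, and `S_w[k] = c` says
exactly that the occurrence of `w` at `sortedOcc[k]` extends to one of `w·c`; this uses `c ≠ d`,
since `S_w` reads the sentinel `d` past the end of `S`.
-/

open Finset

theorem List.append_singleton_prefix_iff {α : Type*} {l m : List α} {a : α} :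
    l ++ [a] <+: m ↔ l <+: m ∧ m[l.length]? = some a := by
  induction l generalizing m with
  | nil => cases m <;> simp [eq_comm]
  | cons x l ih => cases m <;> simp [ih, and_assoc]

theorem List.getD_eq_iff_getElem?_eq_some {α : Type*} {l : List α} {n : ℕ} {a d : α}
    (h : a ≠ d) : l.getD n d = a ↔ l[n]? = some a := by
  rw [List.getD_eq_getElem?_getD]
  cases l[n]? <;> simp [Ne.symm h]

theorem List.Pairwise.exists_filter_eq_take {α : Type*} {p : α → Bool} {l : List α}
    (h : l.Pairwise fun x y => p y → p x) : ∃ r, l.filter p = l.take r := by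
  induction l with
  | nil => exact ⟨0, rfl⟩
  | cons x l ih =>
    obtain ⟨hx, hl⟩ := List.pairwise_cons.1 h
    by_cases hpx : p x
    · obtain ⟨r, hr⟩ := ih hl
      exact ⟨r + 1, by simp [hpx, hr]⟩
    · refine ⟨0, ?_⟩
      rw [List.filter_cons_of_neg hpx, List.take_zero, List.filter_eq_nil_iff]
      exact fun y hy hpy => hpx (hx y hy hpy)

theorem List.Pairwise.exists_filter_eq_drop {α : Type*} {p : α → Bool} {l : List α}
    (h : l.Pairwise fun x y => p x → p y) : ∃ r, l.filter p = l.drop r := by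
  induction l with
  | nil => exact ⟨0, rfl⟩
  | cons x l ih =>
    obtain ⟨hx, hl⟩ := List.pairwise_cons.1 h
    by_cases hpx : p x
    · refine ⟨0, ?_⟩
      rw [List.filter_cons_of_pos hpx, List.drop_zero, List.filter_eq_self.2]
      exact fun y hy => hx y hy hpx
    · obtain ⟨r, hr⟩ := ih hl
      exact ⟨r + 1, by simp [hpx, hr]⟩

theorem List.Pairwise.exists_filter_Ico_eq_take_drop {α : Type*} [Preorder α]
    [DecidableLE α] [DecidableLT α] {l : List α} (h : l.Pairwise (· ≤ ·)) (lo hi : α) :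
    ∃ r₁ r₂, l.filter (fun x => lo ≤ x ∧ x < hi) = (l.drop r₁).take r₂ := by
  obtain ⟨r₁, hr₁⟩ := (h.imp fun hxy hlo => by simp_all [le_trans _ hxy]).exists_filter_eq_drop
    (p := fun x => lo ≤ x)
  obtain ⟨r₂, hr₂⟩ := ((h.sublist (List.drop_sublist r₁ l)).imp fun hxy hhi => by
    simp_all [lt_of_le_of_lt hxy]).exists_filter_eq_take (p := fun x => x < hi)
  refine ⟨r₁, r₂, ?_⟩
  rw [← hr₂, ← hr₁, List.filter_filter]
  simp [Bool.and_comm]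

theorem Finset.exists_filter_range_eq_range {p : ℕ → Prop} [DecidablePred p] {n : ℕ}
    (hp : ∀ i j, i ≤ j → j < n → p j → p i) : ∃ m, (range n).filter p = range m := by
  induction n with
  | zero => exact ⟨0, rfl⟩
  | succ n ih =>
    by_cases hpn : p n
    · refine ⟨n + 1, filter_true_of_mem fun i hi => hp i n (by simp at hi; omega) (by omega) hpn⟩
    · obtain ⟨m, hm⟩ := ih fun i j hij hj => hp i j hij (by omega)
      exact ⟨m, by rw [range_add_one, filter_insert, if_neg hpn, hm]⟩

theorem Finset.exists_filter_range_eq_Ico {β : Type*} [LinearOrder β] {f : ℕ → β} {n : ℕ}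
    (hf : MonotoneOn f (Set.Iio n)) (a b : β) :
    ∃ lo hi, (range n).filter (fun k => a ≤ f k ∧ f k ≤ b) = Ico lo hi := by
  obtain ⟨lo, hlo⟩ := exists_filter_range_eq_range (p := fun k => f k < a) (n := n)
    fun i j hij hj hfj => (hf (by simp; omega) (by simpa using hj) hij).trans_lt hfj
  obtain ⟨hi, hhi⟩ := exists_filter_range_eq_range (p := fun k => f k ≤ b) (n := n)
    fun i j hij hj hfj => (hf (by simp; omega) (by simpa using hj) hij).trans hfj
  refine ⟨lo, hi, ?_⟩
  simp only [Finset.ext_iff, mem_filter, mem_range] at hlo hhi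
  ext k
  rw [mem_filter, mem_range, mem_Ico, ← Nat.not_lt, ← hlo, ← hhi, not_and, not_lt]
  tauto

theorem Finset.card_filter_range_getD {β : Type*} [DecidableEq β] {l : List β} (hl : l.Nodup)
    (p : β → Prop) [DecidablePred p] (x : β) :
    ((range l.length).filter fun k => p (l.getD k x)).card = (l.toFinset.filter p).card := by
  rw [← card_image_of_injOn (f := fun k => l.getD k x)]
  · congr 1
    ext y
    simp only [mem_image, mem_filter, mem_range, List.mem_toFinset, List.mem_iff_getElem]
    constructor
    · rintro ⟨k, ⟨hk, hp⟩, rfl⟩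
      rw [List.getD_eq_getElem _ _ hk] at hp ⊢
      exact ⟨⟨k, hk, rfl⟩, hp⟩
    · rintro ⟨⟨k, hk, rfl⟩, hp⟩
      exact ⟨k, by simp only [List.getD_eq_getElem _ _ hk]; exact ⟨⟨hk, hp⟩, trivial⟩⟩
  · intro i hi j hj hij
    simp only [coe_filter, mem_range, Set.mem_ofPred_eq] at hi hj
    simp only [List.getD_eq_getElem _ _ hi.1, List.getD_eq_getElem _ _ hj.1] at hij
    exact hl.getElem_inj_iff.1 hij

theorem occursAt_append_singleton {α : Type*} {S w : List α} {c : α} {i : ℕ} :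
    occursAt S (w ++ [c]) i ↔ occursAt S w i ∧ S[i + w.length]? = some c := by
  simp only [occursAt, List.append_singleton_prefix_iff, List.getElem?_drop]

section
variable {α : Type*} [DecidableEq α] (S : List α) (ℓ : ℕ → ℕ) (w : List α)

theorem toFinset_sortedOcc :
    (sortedOcc S ℓ w).toFinset = (range S.length).filter (occursAt S w) := by
  ext i
  simp [sortedOcc, (List.mergeSort_perm _ _).mem_iff]

theorem nodup_sortedOcc : (sortedOcc S ℓ w).Nodup :=
  (List.mergeSort_perm _ _).nodup_iff.2 (List.nodup_range.filter _)

theorem pairwise_sortedOcc : (sortedOcc S ℓ w).Pairwise fun i j => ℓ i ≤ ℓ j := by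
  refine (List.pairwise_mergeSort ?_ ?_ _).imp ?_
  · intro x y z hxy hyz; simp only [decide_eq_true_eq] at *; omega
  · intro x y; simp only [Bool.or_eq_true, decide_eq_true_eq]; omega
  · intro x y h; simp only [decide_eq_true_eq] at h; omega

theorem monotoneOn_getD_sortedOcc :
    MonotoneOn (fun k => ℓ ((sortedOcc S ℓ w).getD k 0)) (Set.Iio (sortedOcc S ℓ w).length) := by
  intro i hi j hj hij
  simp only [Set.mem_Iio] at hi hj
  simp only [List.getD_eq_getElem _ _ hi, List.getD_eq_getElem _ _ hj]
  rcases hij.eq_or_lt with rfl | hlt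
  · rfl
  · exact List.pairwise_iff_getElem.1 (pairwise_sortedOcc S ℓ w) i j hi hj hlt

theorem getD_Sw (d : α) {k : ℕ} (hk : k < (sortedOcc S ℓ w).length) :
    (Sw S ℓ d w).getD k d = S.getD ((sortedOcc S ℓ w).getD k 0 + w.length) d := by
  simp only [Sw, List.getD_eq_getElem?_getD, List.getElem?_map, List.getElem?_eq_getElem hk,
    Option.map_some, Option.getD_some]

theorem card_filter_getD_Sw_eq_card_occursAt {d c : α} (hc : c ≠ d) (q : ℕ → Prop)
    [DecidablePred q] :
    ((range (sortedOcc S ℓ w).length).filter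
        fun k => q ((sortedOcc S ℓ w).getD k 0) ∧ (Sw S ℓ d w).getD k d = c).card
      = ((range S.length).filter fun i => occursAt S (w ++ [c]) i ∧ q i).card := by
  rw [filter_congr fun k hk => by rw [getD_Sw S ℓ w d (mem_range.1 hk)],
    card_filter_range_getD (nodup_sortedOcc S ℓ w) (fun i => q i ∧ S.getD (i + w.length) d = c),
    toFinset_sortedOcc, filter_filter]
  congr! 2 with i
  rw [occursAt_append_singleton, List.getD_eq_iff_getElem?_eq_some hc]
  tauto

end

/-- the positions of `S_w` coming from occurrences of `w` with label in `[a,b]`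
form a contiguous interval `[lo,hi)`; the occurrences of `c` inside this interval form a
contiguous range of all occurrences of `c` in `S_w`, and their number is the number of
occurrences of `w·c` in `S` whose first character'"'"'s label lies in `[a,b]`. -/
theorem stmt6 {α : Type*} [DecidableEq α] (S : List α) (ℓ : ℕ → ℕ) (d : α)
    (w : List α) (c : α) (a b : ℕ) (hc : c ≠ d) :
    ∃ lo hi : ℕ,
      (Finset.range (sortedOcc S ℓ w).length).filter
          (fun k => a ≤ ℓ ((sortedOcc S ℓ w).getD k 0) ∧ ℓ ((sortedOcc S ℓ w).getD k 0) ≤ b)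
        = Finset.Ico lo hi
      ∧ (∃ r₁ r₂ : ℕ,
          ((List.range (Sw S ℓ d w).length).filter
              (fun k => decide ((Sw S ℓ d w).getD k d = c ∧ lo ≤ k ∧ k < hi)))
            = (((List.range (Sw S ℓ d w).length).filter
                (fun k => decide ((Sw S ℓ d w).getD k d = c))).drop r₁).take r₂)
      ∧ ((Finset.Ico lo hi).filter (fun k => (Sw S ℓ d w).getD k d = c)).card
          = ((Finset.range S.length).filter
              (fun i => occursAt S (w ++ [c]) i ∧ a ≤ ℓ i ∧ ℓ i ≤ b)).card := by
  obtain ⟨lo, hi, hI⟩ := exists_filter_range_eq_Ico (monotoneOn_getD_sortedOcc S ℓ w) a b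
  refine ⟨lo, hi, hI, ?_, ?_⟩
  · have hsorted : ((List.range (Sw S ℓ d w).length).filter
        (fun k => (Sw S ℓ d w).getD k d = c)).Pairwise (· ≤ ·) :=
      List.pairwise_le_range.sublist List.filter_sublist
    obtain ⟨r₁, r₂, h⟩ := hsorted.exists_filter_Ico_eq_take_drop lo hi
    refine ⟨r₁, r₂, ?_⟩
    rw [← h, List.filter_filter]
    simp [Bool.and_comm]
  · rw [← hI, filter_filter]
    exact card_filter_getD_Sw_eq_card_occursAt S ℓ w hc fun i => a ≤ ℓ i ∧ ℓ i ≤ b
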